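/- arXiv:1502.04091 — 2 statements merged into one kernel-verified Lean document; each statement's English description precedes it below -/
import Mathlib

section
/- Let n ≥ 1 and let (W, γ) be a nonzero Hermitian Clifford module for ℝ^{n+1}. Then for every null vector ζ = (ζ₁, …, ζ_{n+1}, 1) ∈ ℝ^{n+2} with ζ₁² + ⋯ + ζ_{n+1}² = 1 and for each choice of sign ±, there exists a ∈ W with ‖a‖ = 1 such that ζ = ζ_a^±. -/
/-!
Minkowski space `ℝ^{n+1,1}` is modeled as `EuclideanSpace ℝ (Fin (n+1)) × ℝ`.
A Hermitian Clifford module for `ℝ^{n+1}` is a complex inner product space `W`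
with an `ℝ`-linear map `γ : ℝ^{n+1} →ₗ[ℝ] End_ℂ(W)` such that
`γ(v)² = −|v|²·Id` and each `γ(v)` is skew-Hermitian.
-/

/-- The vector `ζ_a^±` of Minkowski space associated to a spinor `a`:
its `j`-th spatial component is `∓i⟨γ(e_j)a, a⟩` (a real number) and its time
component is `‖a‖²`.  The sign `±` is encoded by `ε ∈ {1, -1}`. -/
noncomputable def zetaVec (n : ℕ) {W : Type*} [NormedAddCommGroup W] [InnerProductSpace ℂ W]
    (γ : EuclideanSpace ℝ (Fin (n + 1)) →ₗ[ℝ] (W →ₗ[ℂ] W)) (ε : ℝ) (a : W) :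
    EuclideanSpace ℝ (Fin (n + 1)) × ℝ :=
  ((WithLp.toLp 2 (fun j => (-(ε : ℂ) * Complex.I *
      (inner ℂ (γ (EuclideanSpace.single j (1 : ℝ)) a) a : ℂ)).re) :
      EuclideanSpace ℝ (Fin (n + 1))),
    ‖a‖ ^ 2)

/-!
For a unit vector `z`, the operator `γ z` squares to `-1`, so its eigenvalues are `±i`. Since
`n ≥ 1` there is a nonzero `w ⊥ z`; then `γ w` is injective and anticommutes with `γ z`, so it
exchanges the two eigenspaces and both are nonzero. Take a unit `a` with `γ z a = ∓ i a`. The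
spatial part `ζ` of `ζ_a^±` satisfies `⟪v, ζ⟫ = Re (∓ i ⟨γ v a, a⟩)`; this gives `⟪z, ζ⟫ = 1`
and, because `‖γ v a‖ = ‖v‖`, also `‖ζ‖ ≤ 1`. Equality in Cauchy–Schwarz then forces `ζ = z`.
-/

open Complex
open scoped RealInnerProductSpace

namespace Module.End

variable {R W : Type*} [CommRing R] [AddCommGroup W] [Module R W]

theorem apply_add_smul_eq_smul_of_mul_self_eq_neg_one {T : Module.End R W} (hT : T * T = -1)
    {μ : R} (hμ : μ * μ = -1) (b : W) : T (T b + μ • b) = μ • (T b + μ • b) := by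
  have hb : T (T b) = -b := by simpa using LinearMap.congr_fun hT b
  rw [map_add, map_smul, hb, smul_add, smul_smul, hμ, neg_one_smul, add_comm]

theorem exists_apply_eq_smul_of_mul_self_eq_neg_one [Nontrivial W] {T S : Module.End R W}
    (hT : T * T = -1) (hS : Function.Injective S) (hST : S * T = -(T * S))
    {μ : R} (hμ : μ * μ = -1) : ∃ a, a ≠ 0 ∧ T a = μ • a := by
  obtain ⟨b, hb⟩ := exists_ne (0 : W)
  by_cases hb' : T b + μ • b = 0
  · have hTb : T b = -(μ • b) := eq_neg_of_add_eq_zero_left hb'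
    refine ⟨S b, (map_ne_zero_iff S hS).2 hb, ?_⟩
    have := LinearMap.congr_fun hST b
    simp only [Module.End.mul_apply, LinearMap.neg_apply, hTb, map_neg, map_smul] at this
    rw [← neg_eq_iff_eq_neg.2 this, neg_neg]
  · exact ⟨_, hb', apply_add_smul_eq_smul_of_mul_self_eq_neg_one hT hμ b⟩

end Module.End

theorem eq_of_norm_le_one_of_inner_eq_one {F : Type*} [NormedAddCommGroup F] [InnerProductSpace ℝ F]
    {x y : F} (hx : ‖x‖ = 1) (hy : ‖y‖ ≤ 1) (hxy : ⟪x, y⟫ = 1) : x = y := by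
  have h : ‖x - y‖ ^ 2 ≤ 0 := by
    rw [norm_sub_sq_real, hx, hxy]
    nlinarith [norm_nonneg y]
  rw [← sub_eq_zero, ← norm_eq_zero]
  exact pow_eq_zero_iff two_ne_zero |>.1 (le_antisymm h (by positivity))

theorem exists_ne_zero_inner_eq_zero {F : Type*} [NormedAddCommGroup F] [InnerProductSpace ℝ F]
    [FiniteDimensional ℝ F] (hF : 2 ≤ Module.finrank ℝ F) (x : F) :
    ∃ y : F, y ≠ 0 ∧ ⟪x, y⟫ = 0 := by
  have : Nontrivial (ℝ ∙ x)ᗮ := by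
    apply Module.nontrivial_of_finrank_pos (R := ℝ)
    have := (ℝ ∙ x).finrank_add_finrank_orthogonal
    have : Module.finrank ℝ (ℝ ∙ x) ≤ 1 := (finrank_span_le_card ({x} : Set F)).trans (by simp)
    omega
  obtain ⟨⟨y, hy⟩, hy0⟩ := exists_ne (0 : (ℝ ∙ x)ᗮ)
  exact ⟨y, by simpa using hy0, Submodule.mem_orthogonal_singleton_iff_inner_right.1 hy⟩

section CliffordModule

variable {E W : Type*} [NormedAddCommGroup E] [InnerProductSpace ℝ E]
  [NormedAddCommGroup W] [InnerProductSpace ℂ W] {γ : E →ₗ[ℝ] Module.End ℂ W}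

theorem clifford_sq_apply
    (hγsq : ∀ v, γ v ∘ₗ γ v = ((-(‖v‖ ^ 2 : ℝ) : ℂ)) • (LinearMap.id : W →ₗ[ℂ] W)) (v : E) (a : W) :
    γ v (γ v a) = ((-(‖v‖ ^ 2 : ℝ) : ℂ)) • a := by
  simpa using LinearMap.congr_fun (hγsq v) a

theorem clifford_anticomm_of_inner_eq_zero
    (hγsq : ∀ v, γ v ∘ₗ γ v = ((-(‖v‖ ^ 2 : ℝ) : ℂ)) • (LinearMap.id : W →ₗ[ℂ] W))
    {v w : E} (hvw : ⟪v, w⟫ = 0) : γ v * γ w = -(γ w * γ v) := by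
  have h := hγsq (v + w)
  rw [map_add, norm_add_sq_real, hvw, ← Module.End.one_eq_id, ← Module.End.mul_eq_comp] at h
  have hsq (u : E) : γ u * γ u = ((-(‖u‖ ^ 2 : ℝ) : ℂ)) • 1 := hγsq u
  refine eq_neg_of_add_eq_zero_left ?_
  calc γ v * γ w + γ w * γ v = (γ v + γ w) * (γ v + γ w) - γ v * γ v - γ w * γ w := by noncomm_ring
    _ = 0 := by rw [h, hsq, hsq, ← sub_smul, ← sub_smul]; push_cast; simp

theorem norm_clifford_apply
    (hγsq : ∀ v, γ v ∘ₗ γ v = ((-(‖v‖ ^ 2 : ℝ) : ℂ)) • (LinearMap.id : W →ₗ[ℂ] W))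
    (hγskew : ∀ v (ψ φ : W), (inner ℂ (γ v ψ) φ : ℂ) = -(inner ℂ ψ (γ v φ) : ℂ)) (v : E) (a : W) :
    ‖γ v a‖ = ‖v‖ * ‖a‖ := by
  have h : ‖γ v a‖ ^ 2 = (‖v‖ * ‖a‖) ^ 2 := by
    rw [← inner_self_eq_norm_sq (𝕜 := ℂ), hγskew, clifford_sq_apply hγsq, inner_smul_right,
      inner_self_eq_norm_sq_to_K]
    norm_cast
    simp only [← ofReal_neg, RCLike.re_to_complex, coe_algebraMap, ← ofReal_mul, ofReal_re]
    ring
  exact (sq_eq_sq₀ (norm_nonneg _) (by positivity)).1 h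

theorem exists_unit_eigenvector_clifford [FiniteDimensional ℝ E] [Nontrivial W]
    (hE : 2 ≤ Module.finrank ℝ E)
    (hγsq : ∀ v, γ v ∘ₗ γ v = ((-(‖v‖ ^ 2 : ℝ) : ℂ)) • (LinearMap.id : W →ₗ[ℂ] W))
    {z : E} (hz : ‖z‖ = 1) {μ : ℂ} (hμ : μ * μ = -1) : ∃ a : W, ‖a‖ = 1 ∧ γ z a = μ • a := by
  obtain ⟨w, hw0, hzw⟩ := exists_ne_zero_inner_eq_zero hE z
  have hT : γ z * γ z = -1 := by
    simpa [hz, Module.End.mul_eq_comp, Module.End.one_eq_id] using hγsq z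
  have hS : Function.Injective (γ w) := by
    refine (injective_iff_map_eq_zero _).2 fun b hb => ?_
    have h := clifford_sq_apply hγsq w b
    rw [hb, map_zero, eq_comm, smul_eq_zero] at h
    simpa [hw0] using h
  obtain ⟨a, ha0, ha⟩ := Module.End.exists_apply_eq_smul_of_mul_self_eq_neg_one hT hS
    (clifford_anticomm_of_inner_eq_zero hγsq (real_inner_comm z w ▸ hzw)) hμ
  refine ⟨(‖a‖ : ℂ)⁻¹ • a, norm_smul_inv_norm ha0, ?_⟩
  rw [map_smul, ha, smul_comm]

end CliffordModule

theorem inner_zetaVec_fst {n : ℕ} {W : Type*} [NormedAddCommGroup W] [InnerProductSpace ℂ W]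
    (γ : EuclideanSpace ℝ (Fin (n + 1)) →ₗ[ℝ] (W →ₗ[ℂ] W)) (ε : ℝ) (a : W)
    (v : EuclideanSpace ℝ (Fin (n + 1))) :
    ⟪v, (zetaVec n γ ε a).1⟫ = (-(ε : ℂ) * I * inner ℂ (γ v a) a).re := by
  conv_rhs => rw [← (EuclideanSpace.basisFun (Fin (n + 1)) ℝ).sum_repr v]
  simp [zetaVec, PiLp.inner_apply, Finset.mul_sum, re_sum, mul_left_comm, mul_comm]

theorem zetaVec_eq_of_apply_eq_smul {n : ℕ} {W : Type*} [NormedAddCommGroup W]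
    [InnerProductSpace ℂ W] {γ : EuclideanSpace ℝ (Fin (n + 1)) →ₗ[ℝ] (W →ₗ[ℂ] W)}
    (hγsq : ∀ v, γ v ∘ₗ γ v = ((-(‖v‖ ^ 2 : ℝ) : ℂ)) • (LinearMap.id : W →ₗ[ℂ] W))
    (hγskew : ∀ v (ψ φ : W), (inner ℂ (γ v ψ) φ : ℂ) = -(inner ℂ ψ (γ v φ) : ℂ))
    {z : EuclideanSpace ℝ (Fin (n + 1))} (hz : ‖z‖ = 1) {ε : ℝ} (hε : |ε| = 1) {a : W}
    (ha : ‖a‖ = 1) (hza : γ z a = (-(ε : ℂ) * I) • a) : zetaVec n γ ε a = (z, 1) := by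
  set c : ℂ := -(ε : ℂ) * I
  have hc : ‖c‖ = 1 := by simp [c, hε]
  set w := (zetaVec n γ ε a).1
  have hzw : ⟪z, w⟫ = 1 := by
    rw [inner_zetaVec_fst, hza, inner_smul_left, inner_self_eq_norm_sq_to_K, ha]
    change (c * (starRingEnd ℂ c * _)).re = 1
    rw [RCLike.ofReal_one, one_pow, mul_one, mul_conj, normSq_eq_norm_sq, hc]
    simp
  have hw : ‖w‖ ≤ 1 := by
    have : ‖w‖ ^ 2 ≤ ‖w‖ :=
      calc ‖w‖ ^ 2 = (c * inner ℂ (γ w a) a).re := by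
            rw [← real_inner_self_eq_norm_sq, inner_zetaVec_fst]
        _ ≤ ‖c * inner ℂ (γ w a) a‖ := re_le_norm _
        _ ≤ ‖γ w a‖ * ‖a‖ := by rw [norm_mul, hc, one_mul]; exact norm_inner_le_norm _ _
        _ = ‖w‖ := by rw [norm_clifford_apply hγsq hγskew, ha, mul_one, mul_one]
    nlinarith [norm_nonneg w]
  exact Prod.ext (eq_of_norm_le_one_of_inner_eq_one hz hw hzw).symm (by simp [zetaVec, ha])

theorem exists_unit_spinor_zetaVec_eq_general (n : ℕ) (hn : 1 ≤ n)
    (W : Type*) [NormedAddCommGroup W] [InnerProductSpace ℂ W]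
    [Nontrivial W]
    (γ : EuclideanSpace ℝ (Fin (n + 1)) →ₗ[ℝ] (W →ₗ[ℂ] W))
    (hγsq : ∀ v : EuclideanSpace ℝ (Fin (n + 1)),
      γ v ∘ₗ γ v = ((-(‖v‖ ^ 2 : ℝ) : ℂ)) • (LinearMap.id : W →ₗ[ℂ] W))
    (hγskew : ∀ (v : EuclideanSpace ℝ (Fin (n + 1))) (ψ φ : W),
      (inner ℂ (γ v ψ) φ : ℂ) = -(inner ℂ ψ (γ v φ) : ℂ))
    (z : EuclideanSpace ℝ (Fin (n + 1))) (hz : (∑ j, z j ^ 2) = 1)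
    (ε : ℝ) (hε : ε = 1 ∨ ε = -1) :
    ∃ a : W, ‖a‖ = 1 ∧ zetaVec n γ ε a = (z, 1) := by
  have hz1 : ‖z‖ = 1 := by simp [EuclideanSpace.norm_eq, hz]
  have hε1 : |ε| = 1 := by rcases hε with rfl | rfl <;> simp
  have hμ : (-(ε : ℂ) * I) * (-(ε : ℂ) * I) = -1 := by
    rcases hε with rfl | rfl <;> simp
  have hdim : 2 ≤ Module.finrank ℝ (EuclideanSpace ℝ (Fin (n + 1))) := by
    rw [finrank_euclideanSpace_fin]; omega
  obtain ⟨a, ha, hza⟩ := exists_unit_eigenvector_clifford hdim hγsq hz1 hμ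
  exact ⟨a, ha, zetaVec_eq_of_apply_eq_smul hγsq hγskew hz1 hε1 ha hza⟩

/-- Every null vector `ζ = (ζ₁, …, ζ_{n+1}, 1)` with `ζ₁² + ⋯ + ζ_{n+1}² = 1`
is of the form `ζ_a^±` for some unit spinor `a`, for each choice of sign. -/
theorem exists_unit_spinor_zetaVec_eq (n : ℕ) (hn : 1 ≤ n)
    (W : Type*) [NormedAddCommGroup W] [InnerProductSpace ℂ W]
    [FiniteDimensional ℂ W] [Nontrivial W]
    (γ : EuclideanSpace ℝ (Fin (n + 1)) →ₗ[ℝ] (W →ₗ[ℂ] W))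
    (hγsq : ∀ v : EuclideanSpace ℝ (Fin (n + 1)),
      γ v ∘ₗ γ v = ((-(‖v‖ ^ 2 : ℝ) : ℂ)) • (LinearMap.id : W →ₗ[ℂ] W))
    (hγskew : ∀ (v : EuclideanSpace ℝ (Fin (n + 1))) (ψ φ : W),
      (inner ℂ (γ v ψ) φ : ℂ) = -(inner ℂ ψ (γ v φ) : ℂ))
    (z : EuclideanSpace ℝ (Fin (n + 1))) (hz : (∑ j, z j ^ 2) = 1)
    (ε : ℝ) (hε : ε = 1 ∨ ε = -1) :
    ∃ a : W, ‖a‖ = 1 ∧ zetaVec n γ ε a = (z, 1) :=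
  exists_unit_spinor_zetaVec_eq_general n hn W γ hγsq hγskew z hz ε hε
end

section
/- Let σ be the surface measure on the unit sphere S² ⊂ ℝ³, let T : S² → ℝ be continuous, and let ε > 0. Suppose H, H₀, ρ, w₀ : (0, ε) × S² → ℝ and w : (0, ε) × S² → ℝ³ satisfy, uniformly in x ∈ S² as r → 0⁺: H(r,x) = cosh r − ¼ T(x) r³ + o(r³), H₀(r,x) = cosh r + o(r³), H(r,x) > 0, ρ(r,x) = r⁻² + o(r⁻¹), w₀(r,x) = r⁻¹ + o(1), and w(r,x) = x/r + o(r⁻¹) componentwise. Then lim_{r → 0⁺} ∫_{S²} [(H₀(r,x)² − H(r,x)²)/H(r,x)]·(w₀(r,x), w(r,x))·ρ(r,x) dσ(x) = ½ (∫_{S²} T dσ, ∫_{S²} T(x)·x dσ(x)) in ℝ × ℝ³. -/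
/-! The integrand factors as `(H₀² − H²)/H · ρ · r⁻¹ = ((H₀ − H)/r³) (H₀ + H) H⁻¹ (r²ρ)` times
`r w₀` (resp. `r w`); by the expansions the factors tend to `T/4`, `2`, `1`, `1` and `1`
(resp. `x`). All expansions are uniform in `x`, so these limits hold jointly as `(r, x) → (0⁺, x₀)`;
on the compact sphere this is uniform convergence, which passes to the integrals over the finite
measure `σ`. -/

open Filter Topology MeasureTheory Metric

/-- The surface measure `σ` on the unit sphere `S² ⊂ ℝ³`. -/
noncomputable def sphereMeasure : Measure (sphere (0 : EuclideanSpace ℝ (Fin 3)) 1) :=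
  (volume : Measure (EuclideanSpace ℝ (Fin 3))).toSphere

open Asymptotics

instance : IsFiniteMeasure sphereMeasure := by
  unfold sphereMeasure
  infer_instance

theorem tendstoUniformly_of_forall_tendsto_prod_nhds {ι X β : Type*} [TopologicalSpace X]
    [CompactSpace X] [UniformSpace β] {F : ι → X → β} {f : X → β} {l : Filter ι}
    (hf : Continuous f) (h : ∀ x, Tendsto (fun q : ι × X => F q.1 q.2) (l ×ˢ 𝓝 x) (𝓝 (f x))) :
    TendstoUniformly F f l := by
  rw [← tendstoLocallyUniformly_iff_tendstoUniformly_of_compactSpace,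
    tendstoLocallyUniformly_iff_forall_tendsto]
  exact fun x => (((hf.tendsto x).comp tendsto_snd).prodMk_nhds (h x)).mono_right
    (nhds_le_uniformity (f x))

theorem TendstoUniformly.tendsto_integral {ι X E : Type*} [MeasurableSpace X] {μ : Measure X}
    [IsFiniteMeasure μ] [NormedAddCommGroup E] [NormedSpace ℝ E] {l : Filter ι}
    [l.IsCountablyGenerated] {F : ι → X → E} {f : X → E} (hF : TendstoUniformly F f l)
    (hF_meas : ∀ᶠ i in l, AEStronglyMeasurable (F i) μ) (hf : BddAbove (Set.range fun x => ‖f x‖)) :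
    Tendsto (fun i => ∫ x, F i x ∂μ) l (𝓝 (∫ x, f x ∂μ)) := by
  obtain ⟨C, hC⟩ := hf
  refine tendsto_integral_filter_of_dominated_convergence (fun _ => C + 1) hF_meas ?_
    (integrable_const _) (.of_forall fun x => hF.tendsto_at x)
  filter_upwards [Metric.tendstoUniformly_iff.1 hF 1 one_pos] with i hi
  refine .of_forall fun x => ?_
  have := norm_le_norm_add_norm_sub' (F i x) (f x)
  rw [← dist_eq_norm'] at this
  linarith [hi x, hC ⟨x, rfl⟩]

theorem tendsto_integral_of_forall_tendsto_prod_nhds {ι X E : Type*} [TopologicalSpace X]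
    [CompactSpace X] [MeasurableSpace X] {μ : Measure X} [IsFiniteMeasure μ]
    [NormedAddCommGroup E] [NormedSpace ℝ E] {l : Filter ι} [l.IsCountablyGenerated]
    {F : ι → X → E} {f : X → E} (hf : Continuous f)
    (hF : ∀ x, Tendsto (fun q : ι × X => F q.1 q.2) (l ×ˢ 𝓝 x) (𝓝 (f x)))
    (hF_meas : ∀ᶠ i in l, AEStronglyMeasurable (F i) μ) :
    Tendsto (fun i => ∫ x, F i x ∂μ) l (𝓝 (∫ x, f x ∂μ)) :=
  (tendstoUniformly_of_forall_tendsto_prod_nhds hf hF).tendsto_integral hF_meas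
    (isCompact_range hf.norm).bddAbove

theorem isLittleO_prod_of_forall_abs_le {ι X : Type*} {l : Filter ι} (l' : Filter X)
    {F : ι → X → ℝ} {s : ι → ℝ} (h : ∀ δ > 0, ∀ᶠ i in l, ∀ x, |F i x| ≤ δ * s i) :
    (fun q : ι × X => F q.1 q.2) =o[l ×ˢ l'] (fun q => s q.1) := by
  refine isLittleO_iff.2 fun δ hδ => ?_
  filter_upwards [(h δ hδ).prod_inl l'] with q hq
  simpa only [Real.norm_eq_abs] using (hq q.2).trans (mul_le_mul_of_nonneg_left (le_abs_self _) hδ.le)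

theorem forall_abs_le_mul_inv_of_forall_abs_le {X : Type*} {F : ℝ → X → ℝ}
    (h : ∀ δ > 0, ∀ᶠ r in 𝓝[>] (0 : ℝ), ∀ x, |F r x| ≤ δ) :
    ∀ δ > 0, ∀ᶠ r in 𝓝[>] (0 : ℝ), ∀ x, |F r x| ≤ δ * r⁻¹ := by
  intro δ hδ
  filter_upwards [h δ hδ, Ioo_mem_nhdsGT one_pos] with r hr hr1 x
  exact (hr x).trans (le_mul_of_one_le_right hδ.le ((one_le_inv₀ hr1.1).2 hr1.2.le))

theorem eventually_fst_ne_zero_nhdsGT_prod {X : Type*} (l : Filter X) :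
    ∀ᶠ q in 𝓝[>] (0 : ℝ) ×ˢ l, q.1 ≠ 0 :=
  ((eventually_mem_nhdsWithin (a := (0 : ℝ)) (s := Set.Ioi 0)).mono
    fun _ hr => (Set.mem_Ioi.1 hr).ne').prod_inl l

theorem tendsto_fst_nhdsGT_prod {X : Type*} (l : Filter X) :
    Tendsto Prod.fst (𝓝[>] (0 : ℝ) ×ˢ l) (𝓝 0) :=
  tendsto_fst.mono_right nhdsWithin_le_nhds

section Expansion

variable {X : Type*} [TopologicalSpace X] (x₀ : X)

theorem tendsto_mul_of_abs_sub_inv_mul_le {f : ℝ → X → ℝ} {u : X → ℝ} (hu : ContinuousAt u x₀)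
    (h : ∀ δ > 0, ∀ᶠ r in 𝓝[>] (0 : ℝ), ∀ x, |f r x - r⁻¹ * u x| ≤ δ * r⁻¹) :
    Tendsto (fun q : ℝ × X => q.1 * f q.1 q.2) (𝓝[>] 0 ×ˢ 𝓝 x₀) (𝓝 (u x₀)) := by
  have := (hu.tendsto.comp tendsto_snd).add
    (isLittleO_prod_of_forall_abs_le (𝓝 x₀) h).tendsto_div_nhds_zero
  rw [add_zero] at this
  refine this.congr' ?_
  filter_upwards [eventually_fst_ne_zero_nhdsGT_prod (𝓝 x₀)] with q hq
  simp only [Function.comp_apply]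
  field_simp
  ring

theorem tendsto_smul_of_abs_sub_inv_mul_le {ι : Type*} {v : ℝ → X → EuclideanSpace ℝ ι}
    {u : X → EuclideanSpace ℝ ι} (hu : ContinuousAt u x₀)
    (h : ∀ δ > 0, ∀ᶠ r in 𝓝[>] (0 : ℝ), ∀ x i, |v r x i - r⁻¹ * u x i| ≤ δ * r⁻¹) :
    Tendsto (fun q : ℝ × X => q.1 • v q.1 q.2) (𝓝[>] 0 ×ˢ 𝓝 x₀) (𝓝 (u x₀)) := by
  rw [(PiLp.homeomorph 2 _).isInducing.tendsto_nhds_iff, tendsto_pi_nhds]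
  exact fun i => tendsto_mul_of_abs_sub_inv_mul_le x₀
    ((PiLp.continuous_apply 2 _ i).continuousAt.comp hu) fun δ hδ => (h δ hδ).mono fun r hr x => hr x i

variable {T : X → ℝ} {H H₀ ρ : ℝ → X → ℝ}

theorem tendsto_energy_density (hT : ContinuousAt T x₀)
    (hH : ∀ δ > (0 : ℝ), ∀ᶠ r in 𝓝[>] (0 : ℝ),
      ∀ x, |H r x - (Real.cosh r - T x / 4 * r ^ 3)| ≤ δ * r ^ 3)
    (hH₀ : ∀ δ > (0 : ℝ), ∀ᶠ r in 𝓝[>] (0 : ℝ), ∀ x, |H₀ r x - Real.cosh r| ≤ δ * r ^ 3)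
    (hρ : ∀ δ > (0 : ℝ), ∀ᶠ r in 𝓝[>] (0 : ℝ), ∀ x, |ρ r x - r⁻¹ ^ 2| ≤ δ * r⁻¹) :
    Tendsto (fun q : ℝ × X => (H₀ q.1 q.2 ^ 2 - H q.1 q.2 ^ 2) / H q.1 q.2 * ρ q.1 q.2 * q.1⁻¹)
      (𝓝[>] 0 ×ˢ 𝓝 x₀) (𝓝 (T x₀ / 2)) := by
  have oH := isLittleO_prod_of_forall_abs_le (𝓝 x₀) hH
  have oH₀ := isLittleO_prod_of_forall_abs_le (𝓝 x₀) hH₀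
  have oρ := isLittleO_prod_of_forall_abs_le (𝓝 x₀) hρ
  have hr := tendsto_fst_nhdsGT_prod (𝓝 x₀)
  have hr3 : Tendsto (fun q : ℝ × X => q.1 ^ 3) (𝓝[>] 0 ×ˢ 𝓝 x₀) (𝓝 0) := by
    simpa using hr.pow 3
  have hcosh : Tendsto (fun q : ℝ × X => Real.cosh q.1) (𝓝[>] 0 ×ˢ 𝓝 x₀) (𝓝 1) := by
    have := (Real.continuous_cosh.tendsto 0).comp hr
    rwa [Real.cosh_zero] at this
  have hTq : Tendsto (fun q : ℝ × X => T q.2) (𝓝[>] 0 ×ˢ 𝓝 x₀) (𝓝 (T x₀)) :=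
    hT.tendsto.comp tendsto_snd
  have hH₀_lim : Tendsto (fun q : ℝ × X => H₀ q.1 q.2) (𝓝[>] 0 ×ˢ 𝓝 x₀) (𝓝 1) := by
    simpa using hcosh.add (oH₀.trans_tendsto hr3)
  have hH_lim : Tendsto (fun q : ℝ × X => H q.1 q.2) (𝓝[>] 0 ×ˢ 𝓝 x₀) (𝓝 1) := by
    simpa using (hcosh.sub ((hTq.div_const 4).mul hr3)).add (oH.trans_tendsto hr3)
  have hquot := ((oH₀.tendsto_div_nhds_zero.sub oH.tendsto_div_nhds_zero).add
    (hTq.div_const 4)).mul (hH₀_lim.add hH_lim) |>.mul (hH_lim.inv₀ one_ne_zero)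
    |>.mul ((hr.mul oρ.tendsto_div_nhds_zero).const_add 1)
  rw [show T x₀ / 2 = (0 - 0 + T x₀ / 4) * (1 + 1) * 1⁻¹ * (1 + 0 * 0) by ring]
  refine hquot.congr' ?_
  filter_upwards [eventually_fst_ne_zero_nhdsGT_prod (𝓝 x₀)] with q hq
  field_simp
  ring

theorem tendsto_energy_integrand {E : Type*} [AddCommGroup E] [Module ℝ E] [TopologicalSpace E]
    [ContinuousSMul ℝ E] {v : ℝ → X → E} {u : E} (hT : ContinuousAt T x₀)
    (hH : ∀ δ > (0 : ℝ), ∀ᶠ r in 𝓝[>] (0 : ℝ),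
      ∀ x, |H r x - (Real.cosh r - T x / 4 * r ^ 3)| ≤ δ * r ^ 3)
    (hH₀ : ∀ δ > (0 : ℝ), ∀ᶠ r in 𝓝[>] (0 : ℝ), ∀ x, |H₀ r x - Real.cosh r| ≤ δ * r ^ 3)
    (hρ : ∀ δ > (0 : ℝ), ∀ᶠ r in 𝓝[>] (0 : ℝ), ∀ x, |ρ r x - r⁻¹ ^ 2| ≤ δ * r⁻¹)
    (hv : Tendsto (fun q : ℝ × X => q.1 • v q.1 q.2) (𝓝[>] 0 ×ˢ 𝓝 x₀) (𝓝 u)) :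
    Tendsto (fun q : ℝ × X => ((H₀ q.1 q.2 ^ 2 - H q.1 q.2 ^ 2) / H q.1 q.2 * ρ q.1 q.2) • v q.1 q.2)
      (𝓝[>] 0 ×ˢ 𝓝 x₀) (𝓝 ((T x₀ / 2) • u)) := by
  refine ((tendsto_energy_density x₀ hT hH hH₀ hρ).smul hv).congr' ?_
  filter_upwards [eventually_fst_ne_zero_nhdsGT_prod (𝓝 x₀)] with q hq
  rw [smul_smul, inv_mul_cancel_right₀ hq]

end Expansion

theorem quasilocal_mass_limit_general (T : sphere (0 : EuclideanSpace ℝ (Fin 3)) 1 → ℝ)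
    (hT : Continuous T) (ε : ℝ) (hε : 0 < ε)
    (H H₀ ρ w₀ : ℝ → sphere (0 : EuclideanSpace ℝ (Fin 3)) 1 → ℝ)
    (w : ℝ → sphere (0 : EuclideanSpace ℝ (Fin 3)) 1 → EuclideanSpace ℝ (Fin 3))
    -- continuity in `x` of all the data, for `r ∈ (0, ε)`
    (hcont : ∀ r ∈ Set.Ioo (0 : ℝ) ε, Continuous (H r) ∧ Continuous (H₀ r) ∧
      Continuous (ρ r) ∧ Continuous (w₀ r) ∧ Continuous (w r))
    -- `H(r,x) = cosh r − ¼T(x)r³ + o(r³)` uniformly in `x`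
    (hH : ∀ δ > (0 : ℝ), ∀ᶠ r in 𝓝[>] (0 : ℝ),
      ∀ x, |H r x - (Real.cosh r - T x / 4 * r ^ 3)| ≤ δ * r ^ 3)
    -- `H₀(r,x) = cosh r + o(r³)` uniformly in `x`
    (hH₀ : ∀ δ > (0 : ℝ), ∀ᶠ r in 𝓝[>] (0 : ℝ),
      ∀ x, |H₀ r x - Real.cosh r| ≤ δ * r ^ 3)
    -- `ρ(r,x) = r⁻² + o(r⁻¹)` uniformly in `x`
    (hρ : ∀ δ > (0 : ℝ), ∀ᶠ r in 𝓝[>] (0 : ℝ),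
      ∀ x, |ρ r x - r⁻¹ ^ 2| ≤ δ * r⁻¹)
    -- `w₀(r,x) = r⁻¹ + o(1)` uniformly in `x`
    (hw₀ : ∀ δ > (0 : ℝ), ∀ᶠ r in 𝓝[>] (0 : ℝ),
      ∀ x, |w₀ r x - r⁻¹| ≤ δ)
    -- `w(r,x) = x/r + o(r⁻¹)` componentwise, uniformly in `x`
    (hw : ∀ δ > (0 : ℝ), ∀ᶠ r in 𝓝[>] (0 : ℝ),
      ∀ x, ∀ i : Fin 3, |w r x i - r⁻¹ * (x : EuclideanSpace ℝ (Fin 3)) i| ≤ δ * r⁻¹) :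
    Tendsto (fun r =>
        ((∫ x, (H₀ r x ^ 2 - H r x ^ 2) / H r x * w₀ r x * ρ r x ∂sphereMeasure),
          ∫ x, ((H₀ r x ^ 2 - H r x ^ 2) / H r x * ρ r x) • w r x ∂sphereMeasure))
      (𝓝[>] (0 : ℝ))
      (𝓝 ((1 / 2 * ∫ x, T x ∂sphereMeasure,
        (1 / 2 : ℝ) • ∫ x, T x • ((x : EuclideanSpace ℝ (Fin 3))) ∂sphereMeasure))) := by
  have hmeas : ∀ᶠ r in 𝓝[>] (0 : ℝ),
      AEStronglyMeasurable (fun x => (H₀ r x ^ 2 - H r x ^ 2) / H r x * w₀ r x * ρ r x)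
        sphereMeasure ∧
      AEStronglyMeasurable (fun x => ((H₀ r x ^ 2 - H r x ^ 2) / H r x * ρ r x) • w r x)
        sphereMeasure := by
    filter_upwards [Ioo_mem_nhdsGT hε] with r hr
    obtain ⟨_, _, _, _, _⟩ := hcont r hr
    refine ⟨Measurable.aestronglyMeasurable ?_, Measurable.aestronglyMeasurable ?_⟩ <;> fun_prop
  have hscalar : ∀ x₀, Tendsto (fun q : ℝ × _ =>
      (H₀ q.1 q.2 ^ 2 - H q.1 q.2 ^ 2) / H q.1 q.2 * w₀ q.1 q.2 * ρ q.1 q.2)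
      (𝓝[>] 0 ×ˢ 𝓝 x₀) (𝓝 (T x₀ / 2)) := fun x₀ => by
    simpa [mul_right_comm] using tendsto_energy_integrand x₀ hT.continuousAt hH hH₀ hρ
      (tendsto_mul_of_abs_sub_inv_mul_le x₀ (u := fun _ => 1) continuousAt_const
        (by simpa using forall_abs_le_mul_inv_of_forall_abs_le hw₀))
  have hvector := fun x₀ => tendsto_energy_integrand x₀ hT.continuousAt hH hH₀ hρ
    (tendsto_smul_of_abs_sub_inv_mul_le x₀ continuous_subtype_val.continuousAt hw)
  convert (tendsto_integral_of_forall_tendsto_prod_nhds (hT.div_const 2) hscalar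
    (hmeas.mono fun _ h => h.1)).prodMk_nhds (tendsto_integral_of_forall_tendsto_prod_nhds
      ((hT.div_const 2).smul continuous_subtype_val) hvector (hmeas.mono fun _ h => h.2)) using 3
  · rw [integral_div]
    ring
  · rw [← integral_smul]
    simp_rw [smul_smul, one_div, inv_mul_eq_div]
    rfl

/-- Analytic core of Theorem 4.5: given the uniform expansions (as `r → 0⁺`,
uniformly in `x ∈ S²`) `H = cosh r − ¼T(x)r³ + o(r³)`, `H₀ = cosh r + o(r³)`,
`H > 0`, `ρ = r⁻² + o(r⁻¹)`, `w₀ = r⁻¹ + o(1)` and `w = x/r + o(r⁻¹)`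
componentwise, the quasi-local energy-momentum vector
`E(S_r) = ∫ ((H₀² − H²)/H)·(w₀, w)·ρ dσ` converges to
`½(∫ T dσ, ∫ T·x dσ)` in `ℝ × ℝ³`. -/
theorem quasilocal_mass_limit (T : sphere (0 : EuclideanSpace ℝ (Fin 3)) 1 → ℝ)
    (hT : Continuous T) (ε : ℝ) (hε : 0 < ε)
    (H H₀ ρ w₀ : ℝ → sphere (0 : EuclideanSpace ℝ (Fin 3)) 1 → ℝ)
    (w : ℝ → sphere (0 : EuclideanSpace ℝ (Fin 3)) 1 → EuclideanSpace ℝ (Fin 3))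
    -- continuity in `x` of all the data, for `r ∈ (0, ε)`
    (hcont : ∀ r ∈ Set.Ioo (0 : ℝ) ε, Continuous (H r) ∧ Continuous (H₀ r) ∧
      Continuous (ρ r) ∧ Continuous (w₀ r) ∧ Continuous (w r))
    -- `H(r,x) = cosh r − ¼T(x)r³ + o(r³)` uniformly in `x`
    (hH : ∀ δ > (0 : ℝ), ∀ᶠ r in 𝓝[>] (0 : ℝ),
      ∀ x, |H r x - (Real.cosh r - T x / 4 * r ^ 3)| ≤ δ * r ^ 3)
    -- `H₀(r,x) = cosh r + o(r³)` uniformly in `x`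
    (hH₀ : ∀ δ > (0 : ℝ), ∀ᶠ r in 𝓝[>] (0 : ℝ),
      ∀ x, |H₀ r x - Real.cosh r| ≤ δ * r ^ 3)
    -- positivity of the mean curvature
    (hHpos : ∀ r ∈ Set.Ioo (0 : ℝ) ε, ∀ x, 0 < H r x)
    -- `ρ(r,x) = r⁻² + o(r⁻¹)` uniformly in `x`
    (hρ : ∀ δ > (0 : ℝ), ∀ᶠ r in 𝓝[>] (0 : ℝ),
      ∀ x, |ρ r x - r⁻¹ ^ 2| ≤ δ * r⁻¹)
    -- `w₀(r,x) = r⁻¹ + o(1)` uniformly in `x`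
    (hw₀ : ∀ δ > (0 : ℝ), ∀ᶠ r in 𝓝[>] (0 : ℝ),
      ∀ x, |w₀ r x - r⁻¹| ≤ δ)
    -- `w(r,x) = x/r + o(r⁻¹)` componentwise, uniformly in `x`
    (hw : ∀ δ > (0 : ℝ), ∀ᶠ r in 𝓝[>] (0 : ℝ),
      ∀ x, ∀ i : Fin 3, |w r x i - r⁻¹ * (x : EuclideanSpace ℝ (Fin 3)) i| ≤ δ * r⁻¹) :
    Tendsto (fun r =>
        ((∫ x, (H₀ r x ^ 2 - H r x ^ 2) / H r x * w₀ r x * ρ r x ∂sphereMeasure),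
          ∫ x, ((H₀ r x ^ 2 - H r x ^ 2) / H r x * ρ r x) • w r x ∂sphereMeasure))
      (𝓝[>] (0 : ℝ))
      (𝓝 ((1 / 2 * ∫ x, T x ∂sphereMeasure,
        (1 / 2 : ℝ) • ∫ x, T x • ((x : EuclideanSpace ℝ (Fin 3))) ∂sphereMeasure))) :=
  quasilocal_mass_limit_general T hT ε hε H H₀ ρ w₀ w hcont hH hH₀ hρ hw₀ hw
end
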